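/- Let N ∈ ℕ and let F₂ : [0, 1) → ℝ be a function that can be represented as F₂(x) = c₁(1-x)^{-1/2} + c₂(1-x)^{1/2} + F̃₂(x), where c₁ > 0, c₂ ∈ ℝ, and F̃₂ is continuously differentiable on [0, 1]. Then there exist constants L₂ > 0, L₂* > c₁ and l₂ (depending on F₂ and N) such that for all n ≥ N, L₂*/n^{1/2} − l₂/n ≤ ∫_{0}^{1} F₂(x) dx − Σ_{k = 0}^{n-1} (1/n) F₂(k/n) ≤ L₂/n^{1/2}. -/

import Mathlib

/-!
The Riemann error `∫₀¹ f - (1/n) ∑_{k<n} f(k/n)` is linear in `f`. For the `C¹` part it is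
`O(1/n)` by the Lipschitz bound, and for the monotone `(1-x)^{1/2}` it is `O(1/n)` because the
errors on the subintervals telescope. For `(1-x)^{-1/2}` it equals exactly
`2 - n^{-1/2} ∑_{j=1}^n j^{-1/2}`, and `2(√(j+1) - √j)` lies between `(j+1)^{-1/2}` and `j^{-1/2}`.
Summing gives the upper bound `2/√n`; keeping the terms `j = 1, 2` exact and telescoping the rest
gives `∑_{j ≤ n} j^{-1/2} ≤ 2√n - (3√2/2 - 1)`, and `3√2/2 - 1 > 1` is what makes `L₂* > c₁`.
-/

open MeasureTheory Set Finset
open scoped NNReal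

noncomputable def riemannError (f : ℝ → ℝ) (n : ℕ) : ℝ :=
  (∫ x in (0 : ℝ)..1, f x) - ∑ k ∈ range n, (1 / (n : ℝ)) * f ((k : ℝ) / (n : ℝ))

namespace riemannError

variable {f g : ℝ → ℝ} {n : ℕ}

lemma congr_Ico (h : EqOn f g (Ico 0 1)) : riemannError f n = riemannError g n := by
  have hint : (∫ x in (0 : ℝ)..1, f x) = ∫ x in (0 : ℝ)..1, g x := by
    refine intervalIntegral.integral_congr_ae <|
      (Measure.ae_ne volume (1 : ℝ)).mono fun x hx hmem ↦ ?_
    rw [uIoc_of_le zero_le_one] at hmem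
    exact h ⟨hmem.1.le, lt_of_le_of_ne hmem.2 hx⟩
  have hsum : ∀ k ∈ range n, f (k / n) = g (k / n) := fun k hk ↦ by
    have hk : (k : ℝ) < n := by exact_mod_cast mem_range.1 hk
    exact h ⟨by positivity, (div_lt_one (by linarith [k.cast_nonneg (α := ℝ)])).2 hk⟩
  rw [riemannError, riemannError, hint, sum_congr rfl fun k hk ↦ by rw [hsum k hk]]

lemma add (hf : IntervalIntegrable f volume 0 1) (hg : IntervalIntegrable g volume 0 1) :
    riemannError (fun x ↦ f x + g x) n = riemannError f n + riemannError g n := by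
  simp only [riemannError, intervalIntegral.integral_add hf hg, mul_add, sum_add_distrib]
  ring

lemma const_mul (c : ℝ) :
    riemannError (fun x ↦ c * f x) n = c * riemannError f n := by
  simp only [riemannError, intervalIntegral.integral_const_mul, mul_sub, mul_sum]
  congr 1
  exact sum_congr rfl fun _ _ ↦ by ring

lemma eq_div (hn : n ≠ 0) :
    riemannError f n = ((∫ t in (0 : ℝ)..n, f (t / n)) - ∑ k ∈ range n, f (k / n)) / n := by
  have hn' : (n : ℝ) ≠ 0 := Nat.cast_ne_zero.2 hn
  rw [intervalIntegral.integral_comp_div _ hn', zero_div, div_self hn', riemannError, ← mul_sum]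
  field_simp
  ring

lemma abs_le_of_antitoneOn (hf : AntitoneOn f (Icc 0 1)) (hn : n ≠ 0) :
    |riemannError f n| ≤ (f 0 - f 1) / n := by
  have hn' : (0 : ℝ) < n := Nat.cast_pos.2 (Nat.pos_of_ne_zero hn)
  have hg : AntitoneOn (fun t ↦ f (t / n)) (Icc 0 (0 + n)) := fun s hs t ht hst ↦
    hf ⟨by have := hs.1; positivity, (div_le_one hn').2 (by linarith [hs.2])⟩
      ⟨by have := ht.1; positivity, (div_le_one hn').2 (by linarith [ht.2])⟩
      (div_le_div_of_nonneg_right hst hn'.le)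
  have hupper := hg.integral_le_sum
  have hlower := hg.sum_le_integral
  have htel := sum_range_sub' (fun i : ℕ ↦ f (i / n)) n
  simp only [zero_add] at hupper hlower
  simp only [sum_sub_distrib, Nat.cast_zero, zero_div, div_self hn'.ne'] at htel
  rw [eq_div hn, abs_div, Nat.abs_cast, abs_of_nonpos (by linarith)]
  gcongr
  linarith

lemma abs_le_of_lipschitzOnWith {K : ℝ≥0} (hf : LipschitzOnWith K f (Icc 0 1)) (hn : n ≠ 0) :
    |riemannError f n| ≤ K / n := by
  have hn' : (0 : ℝ) < n := Nat.cast_pos.2 (Nat.pos_of_ne_zero hn)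
  have hmaps : MapsTo (fun t : ℝ ↦ t / n) (Icc 0 n) (Icc 0 1) := fun t ht ↦
    ⟨by have := ht.1; positivity, (div_le_one hn').2 ht.2⟩
  have hint : ∀ k < n, IntervalIntegrable (fun t ↦ f (t / n)) volume (k : ℕ) (k + 1 : ℕ) := by
    intro k hk
    refine ((hf.continuousOn.comp (continuousOn_id.div_const _) hmaps).mono ?_).intervalIntegrable
    rw [Set.uIcc_of_le (by simp)]
    exact Icc_subset_Icc (by positivity) (by exact_mod_cast hk)
  have hpiece : ∀ k < n,
      |(∫ t in (k : ℝ)..(k + 1 : ℕ), f (t / n)) - f (k / n)| ≤ K / n := by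
    intro k hk
    have hk' : (k + 1 : ℝ) ≤ n := by exact_mod_cast hk
    rw [show f (k / n) = ∫ _ in (k : ℝ)..(k + 1 : ℕ), f (k / n) by simp,
      ← intervalIntegral.integral_sub (hint k hk) intervalIntegrable_const, ← Real.norm_eq_abs]
    calc _ ≤ K / n * |((k + 1 : ℕ) : ℝ) - k| :=
          intervalIntegral.norm_integral_le_of_norm_le_const fun t ht ↦ ?_
      _ = K / n := by simp
    rw [uIoc_of_le (by simp), Nat.cast_succ] at ht
    have htk : 0 ≤ t - k := by linarith [ht.1]
    calc ‖f (t / n) - f (k / n)‖ ≤ K * dist (t / n) (k / n) :=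
          hf.dist_le_mul _ (hmaps ⟨by linarith [ht.1], by linarith [ht.2]⟩) _
            (hmaps ⟨by positivity, by linarith⟩)
      _ ≤ K / n := by
        rw [Real.dist_eq, ← sub_div, abs_div, abs_of_nonneg htk, Nat.abs_cast, ← mul_div_assoc]
        gcongr
        exact mul_le_of_le_one_right K.2 (by linarith [ht.2])
  have hsum := intervalIntegral.sum_integral_adjacent_intervals hint
  rw [Nat.cast_zero] at hsum
  rw [eq_div hn, ← hsum, ← sum_sub_distrib, abs_div, Nat.abs_cast, div_le_div_iff_of_pos_right hn']
  calc |∑ k ∈ range n, ((∫ t in (k : ℝ)..(k + 1 : ℕ), f (t / n)) - f (k / n))|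
      ≤ ∑ k ∈ range n, |(∫ t in (k : ℝ)..(k + 1 : ℕ), f (t / n)) - f (k / n)| :=
        abs_sum_le_sum_abs _ _
    _ ≤ ∑ _k ∈ range n, (K / n : ℝ) := sum_le_sum fun k hk ↦ hpiece k (mem_range.1 hk)
    _ = K := by rw [sum_const, card_range, nsmul_eq_mul]; field_simp

end riemannError

lemma integral_one_sub_rpow {r : ℝ} (hr : -1 < r) :
    ∫ x in (0 : ℝ)..1, (1 - x) ^ r = 1 / (r + 1) := by
  rw [intervalIntegral.integral_comp_sub_left (fun y ↦ y ^ r), sub_self, sub_zero,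
    integral_rpow (Or.inl hr), Real.one_rpow, Real.zero_rpow (by linarith : r + 1 ≠ 0)]
  ring

lemma intervalIntegrable_one_sub_rpow {r : ℝ} (hr : -1 < r) :
    IntervalIntegrable (fun x : ℝ ↦ (1 - x) ^ r) volume 0 1 := by
  simpa using
    ((intervalIntegral.intervalIntegrable_rpow' (a := 0) (b := 1) hr).comp_sub_left 1).symm

lemma sum_range_comp_one_sub_div {M : Type*} [AddCommMonoid M] (f : ℝ → M) (n : ℕ) :
    ∑ k ∈ range n, f (1 - k / n) = ∑ k ∈ range n, f ((k + 1) / n) := by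
  rw [← sum_range_reflect]
  refine sum_congr rfl fun k hk ↦ congrArg f ?_
  have hk := mem_range.1 hk
  have hn : (n : ℝ) ≠ 0 := by exact_mod_cast (Nat.zero_lt_of_lt hk).ne'
  rw [Nat.cast_sub (by omega), Nat.cast_sub (by omega)]
  field_simp
  push_cast
  ring

lemma one_div_sqrt_add_one_le {x : ℝ} (hx : 0 ≤ x) :
    1 / √(x + 1) ≤ 2 * (√(x + 1) - √x) := by
  have h1 : 0 < √(x + 1) := Real.sqrt_pos.2 (by linarith)
  have hx2 := Real.sq_sqrt hx
  have hx12 := Real.sq_sqrt (by linarith : 0 ≤ x + 1)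
  have hle : √x ≤ √(x + 1) := Real.sqrt_le_sqrt (by linarith)
  rw [div_le_iff₀ h1]
  nlinarith [sq_nonneg (√(x + 1) - √x)]

lemma two_mul_sqrt_add_one_sub_sqrt_le {x : ℝ} (hx : 0 < x) :
    2 * (√(x + 1) - √x) ≤ 1 / √x := by
  have h0 : 0 < √x := Real.sqrt_pos.2 hx
  have hx2 := Real.sq_sqrt hx.le
  have hx12 := Real.sq_sqrt (by linarith : 0 ≤ x + 1)
  have hle : √x ≤ √(x + 1) := Real.sqrt_le_sqrt (by linarith)
  rw [le_div_iff₀ h0]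
  nlinarith [sq_nonneg (√(x + 1) - √x)]

lemma two_mul_sqrt_add_one_sub_two_le_sum_range_one_div_sqrt (n : ℕ) :
    2 * √(n + 1) - 2 ≤ ∑ j ∈ range n, 1 / √(j + 1) := by
  have htel := sum_range_sub (fun i : ℕ ↦ 2 * √(i + 1)) n
  simp only [Nat.cast_zero, zero_add, Real.sqrt_one, mul_one, Nat.cast_succ] at htel
  rw [← htel]
  refine sum_le_sum fun j _ ↦ ?_
  have := two_mul_sqrt_add_one_sub_sqrt_le (by positivity : (0 : ℝ) < j + 1)
  linarith

lemma sum_range_one_div_sqrt_le {n : ℕ} (hn : 2 ≤ n) :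
    ∑ j ∈ range n, 1 / √(j + 1) ≤ 2 * √n - (3 / 2 * √2 - 1) := by
  induction n, hn using Nat.le_induction with
  | base =>
    have h2 : √2 ^ 2 = 2 := Real.sq_sqrt (by norm_num)
    have h2pos : 0 < √2 := by positivity
    norm_num [sum_range_succ]
    field_simp
    nlinarith
  | succ n _ ih =>
    rw [sum_range_succ]
    have := one_div_sqrt_add_one_le (Nat.cast_nonneg n)
    push_cast
    linarith

lemma riemannError_one_sub_rpow_neg_half (n : ℕ) :
    riemannError (fun x ↦ (1 - x) ^ (-(1 : ℝ) / 2)) n =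
      2 - (∑ j ∈ range n, 1 / √(j + 1)) / √n := by
  rw [riemannError, integral_one_sub_rpow (by norm_num),
    sum_range_comp_one_sub_div (fun y ↦ 1 / (n : ℝ) * y ^ (-(1 : ℝ) / 2)), sum_div]
  norm_num
  refine sum_congr rfl fun j hj ↦ ?_
  have hn : (0 : ℝ) < n := by exact_mod_cast Nat.zero_lt_of_lt (mem_range.1 hj)
  have hj : (0 : ℝ) < j + 1 := by positivity
  rw [Real.rpow_neg (by positivity), ← Real.sqrt_eq_rpow, Real.sqrt_div hj.le]
  field_simp
  rw [Real.sq_sqrt hn.le]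

lemma riemannError_one_sub_rpow_neg_half_le {n : ℕ} (hn : n ≠ 0) :
    riemannError (fun x ↦ (1 - x) ^ (-(1 : ℝ) / 2)) n ≤ 2 / √n := by
  have hs : 0 < √n := Real.sqrt_pos.2 (by exact_mod_cast Nat.pos_of_ne_zero hn)
  have hsum : (2 * √n - 2) / √n ≤ (∑ j ∈ range n, 1 / √(j + 1)) / √n := by
    have := two_mul_sqrt_add_one_sub_two_le_sum_range_one_div_sqrt n
    have : √n ≤ √(n + 1) := Real.sqrt_le_sqrt (by linarith)
    gcongr
    linarith
  have heq : (2 * √n - 2) / √n = 2 - 2 / √n := by field_simp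
  rw [riemannError_one_sub_rpow_neg_half]
  linarith

lemma le_riemannError_one_sub_rpow_neg_half {n : ℕ} (hn : n ≠ 0) :
    (3 / 2 * √2 - 1) / √n - 1 / n ≤ riemannError (fun x ↦ (1 - x) ^ (-(1 : ℝ) / 2)) n := by
  rw [riemannError_one_sub_rpow_neg_half]
  obtain rfl | hn2 : n = 1 ∨ 2 ≤ n := by omega
  · have h2 : √2 ^ 2 = 2 := Real.sq_sqrt (by norm_num)
    norm_num
    nlinarith
  · have hs : 0 < √n := Real.sqrt_pos.2 (by positivity)
    have hsum : (∑ j ∈ range n, 1 / √(j + 1)) / √n ≤ (2 * √n - (3 / 2 * √2 - 1)) / √n := by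
      gcongr
      exact sum_range_one_div_sqrt_le hn2
    have heq : (2 * √n - (3 / 2 * √2 - 1)) / √n = 2 - (3 / 2 * √2 - 1) / √n := by field_simp
    linarith [show (0 : ℝ) ≤ 1 / n by positivity]

lemma abs_riemannError_one_sub_sqrt_le {n : ℕ} (hn : n ≠ 0) :
    |riemannError (fun x ↦ (1 - x) ^ ((1 : ℝ) / 2)) n| ≤ 1 / n := by
  have hanti : AntitoneOn (fun x : ℝ ↦ (1 - x) ^ ((1 : ℝ) / 2)) (Icc 0 1) :=
    fun x _ y hy hxy ↦ Real.rpow_le_rpow (by linarith [hy.2]) (by linarith) (by norm_num)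
  simpa using riemannError.abs_le_of_antitoneOn hanti hn

lemma riemannError_eq_of_eqOn_Ico {F g : ℝ → ℝ} {c₁ c₂ : ℝ} (hg : IntervalIntegrable g volume 0 1)
    (hF : ∀ x ∈ Ico (0 : ℝ) 1,
      F x = c₁ * (1 - x) ^ (-(1 : ℝ) / 2) + c₂ * (1 - x) ^ ((1 : ℝ) / 2) + g x) (n : ℕ) :
    riemannError F n =
      c₁ * riemannError (fun x ↦ (1 - x) ^ (-(1 : ℝ) / 2)) n +
        (c₂ * riemannError (fun x ↦ (1 - x) ^ ((1 : ℝ) / 2)) n + riemannError g n) := by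
  have hint₁ := (intervalIntegrable_one_sub_rpow (r := -(1 : ℝ) / 2) (by norm_num)).const_mul c₁
  have hint₂ := (intervalIntegrable_one_sub_rpow (r := (1 : ℝ) / 2) (by norm_num)).const_mul c₂
  rw [riemannError.congr_Ico (fun x hx ↦ hF x hx), riemannError.add (hint₁.add hint₂) hg,
    riemannError.add hint₁ hint₂, riemannError.const_mul, riemannError.const_mul, add_assoc]

/-- Proposition 2 for z₀ = 0: if F₂(x) = c₁(1-x)^{-1/2} + c₂(1-x)^{1/2} + Ft(x)
on [0,1) with c₁ > 0 and Ft ∈ C¹[0,1], then there are L₂ > 0, L₂* > c₁ and l₂ such that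
L₂*/√n − l₂/n ≤ ∫_0^1 F₂ − Σ_{k=0}^{n-1} (1/n) F₂(k/n) ≤ L₂/√n for all n ≥ N. -/
theorem riemann_error_inv_sqrt_zero
    (N : ℕ) (hN : 0 < N) (F₂ Ft : ℝ → ℝ) (c₁ c₂ : ℝ) (hc₁ : 0 < c₁)
    (hFt : ContDiffOn ℝ 1 Ft (Set.Icc (0 : ℝ) 1))
    (hrep : ∀ x ∈ Set.Ico (0 : ℝ) 1,
      F₂ x = c₁ * (1 - x) ^ (-(1 : ℝ)/2) + c₂ * (1 - x) ^ ((1 : ℝ)/2) + Ft x) :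
    ∃ L₂ > (0 : ℝ), ∃ L₂' > c₁, ∃ l₂ : ℝ, ∀ n : ℕ, N ≤ n →
      L₂' / Real.sqrt n - l₂ / (n : ℝ) ≤
        (∫ x in (0 : ℝ)..1, F₂ x) -
          ∑ k ∈ Finset.range n, (1/(n : ℝ)) * F₂ ((k : ℝ)/(n : ℝ)) ∧
      (∫ x in (0 : ℝ)..1, F₂ x) -
          ∑ k ∈ Finset.range n, (1/(n : ℝ)) * F₂ ((k : ℝ)/(n : ℝ))
        ≤ L₂ / Real.sqrt n := by
  obtain ⟨K, hK⟩ := hFt.exists_lipschitzOnWith one_ne_zero (convex_Icc 0 1) isCompact_Icc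
  have hc : 1 < 3 / 2 * √2 - 1 := by
    nlinarith [Real.sq_sqrt (show (0 : ℝ) ≤ 2 by norm_num), Real.sqrt_nonneg 2]
  refine ⟨2 * c₁ + |c₂| + K, by positivity, c₁ * (3 / 2 * √2 - 1), by nlinarith, c₁ + |c₂| + K,
    fun n hn ↦ ?_⟩
  have hn0 : n ≠ 0 := by omega
  have hrest : |c₂ * riemannError (fun x ↦ (1 - x) ^ ((1 : ℝ) / 2)) n + riemannError Ft n|
      ≤ (|c₂| + K) / n :=
    calc _ ≤ |c₂| * |riemannError (fun x ↦ (1 - x) ^ ((1 : ℝ) / 2)) n| + |riemannError Ft n| := by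
          rw [← abs_mul]; exact abs_add_le _ _
      _ ≤ |c₂| * (1 / n) + K / n := by
          gcongr
          exacts [abs_riemannError_one_sub_sqrt_le hn0,
            riemannError.abs_le_of_lipschitzOnWith hK hn0]
      _ = (|c₂| + K) / n := by ring
  have hsqrt_le : √n ≤ n := (Real.sqrt_le_left (Nat.cast_nonneg n)).2 (by
    have : (1 : ℝ) ≤ n := by exact_mod_cast Nat.one_le_iff_ne_zero.2 hn0
    nlinarith)
  change _ ≤ riemannError F₂ n ∧ riemannError F₂ n ≤ _
  rw [riemannError_eq_of_eqOn_Ico (hK.continuousOn.intervalIntegrable_of_Icc zero_le_one) hrep]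
  obtain ⟨hrest_lower, hrest_upper⟩ := abs_le.mp hrest
  constructor
  · have := mul_le_mul_of_nonneg_left (le_riemannError_one_sub_rpow_neg_half hn0) hc₁.le
    have heq : c₁ * (3 / 2 * √2 - 1) / √n - (c₁ + |c₂| + K) / n =
        c₁ * ((3 / 2 * √2 - 1) / √n - 1 / n) - (|c₂| + K) / n := by ring
    linarith
  · have := mul_le_mul_of_nonneg_left (riemannError_one_sub_rpow_neg_half_le hn0) hc₁.le
    have : (|c₂| + K) / n ≤ (|c₂| + K) / √n := by gcongr
    have heq : (2 * c₁ + |c₂| + K) / √n = c₁ * (2 / √n) + (|c₂| + K) / √n := by ring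
    linarith
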